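/- Let u be a finite game with payoffs in [-1,1], and let a be a strict pure Nash equilibrium of u. Then in the game v = u + Σ_{i∈[n]} z(3, i, a_{-i}), the profile a is a strict simultaneous maximizer: v_i(a) > v_i(b) for every player i and every profile b ∈ A with b ≠ a. -/

import Mathlib

open scoped Classical

noncomputable section

/-- A finite normal-form game on action sets `A i`: a payoff function for each player. -/
abbrev Game {n : ℕ} (A : Fin n → Type*) : Type _ :=
  Fin n → (∀ j, A j) → ℝ

/-- Opponents' action profiles of player `i`. -/
abbrev Opp {n : ℕ} (A : Fin n → Type*) (i : Fin n) : Type _ :=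
  ∀ j : {j : Fin n // j ≠ i}, A j.1

/-- The game `z(c, i, b₋ᵢ)`: player `i` receives payoff `c` at every profile whose
opponents' component equals `b`, and `0` otherwise; all other players always get `0`. -/
def zGame {n : ℕ} {A : Fin n → Type*} (c : ℝ) (i : Fin n) (b : Opp A i) : Game A :=
  fun j a => if j = i ∧ (∀ k : {k : Fin n // k ≠ i}, a k.1 = b k) then c else 0

/-- The full action profile obtained from own action `ai` of player `i` and an
opponents' profile `b`. -/
def merge {n : ℕ} {A : Fin n → Type*} (i : Fin n) (ai : A i) (b : Opp A i) : ∀ j, A j :=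
  fun j => if h : j = i then cast (congrArg A h.symm) ai else b ⟨j, h⟩

/-- The pure individually rational value of player `i`:
`pir_i(u) = max_{a_i} min_{a_{-i}} u_i(a_i, a_{-i})`. -/
def pir {n : ℕ} {A : Fin n → Type*} (u : Game A) (i : Fin n) : ℝ :=
  ⨆ ai : A i, ⨅ b : Opp A i, u i (merge i ai b)

/-- `a` is a pure Nash equilibrium of `u`. -/
def IsPNE {n : ℕ} {A : Fin n → Type*} (u : Game A) (a : ∀ j, A j) : Prop :=
  ∀ (i : Fin n) (bi : A i), u i (Function.update a i bi) ≤ u i a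

section

variable {n : ℕ} {A : Fin n → Type*}

theorem zGame_apply_of_ne (c : ℝ) {i j : Fin n} (b : Opp A i) (h : j ≠ i) (x : ∀ k, A k) :
    zGame c i b j x = 0 :=
  if_neg fun h' => h h'.1

theorem zGame_apply_self (c : ℝ) (i : Fin n) (b : Opp A i) (x : ∀ k, A k) :
    zGame c i b i x = if ∀ k : {k : Fin n // k ≠ i}, x k.1 = b k then c else 0 := by
  simp only [zGame, true_and]

theorem sum_zGame_apply (c : ℝ) (p : ∀ i, Opp A i) (i : Fin n) (x : ∀ k, A k) :
    (∑ j, zGame c j (p j)) i x = if ∀ k : {k : Fin n // k ≠ i}, x k.1 = p i k then c else 0 := by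
  rw [Finset.sum_apply, Finset.sum_apply, Finset.sum_eq_single i
    (fun j _ hj => zGame_apply_of_ne c (p j) (Ne.symm hj) x) (by simp), zGame_apply_self]

/- A profile differing from `a` only in player `i`'s action keeps the bonus and loses by
strictness of the equilibrium; any other profile forgoes the bonus, which exceeds every payoff
difference `2 M`. -/
theorem lt_add_sum_zGame_of_strict_nash (u : Game A) {M c : ℝ} (hc : 2 * M < c)
    (hu : ∀ i b, |u i b| ≤ M) {a : ∀ j, A j}
    (ha : ∀ i (bi : A i), bi ≠ a i → u i (Function.update a i bi) < u i a)
    (i : Fin n) {b : ∀ j, A j} (hb : b ≠ a) :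
    (u + ∑ j, zGame c j (fun k => a k.1)) i b < (u + ∑ j, zGame c j (fun k => a k.1)) i a := by
  simp only [Pi.add_apply, sum_zGame_apply, implies_true, if_true]
  split_ifs with hba
  · have hupd : Function.update a i (b i) = b :=
      Function.update_eq_iff.2 ⟨rfl, fun j hj => (hba ⟨j, hj⟩).symm⟩
    have hbi : b i ≠ a i := fun h => hb (by rw [← hupd, h, Function.update_eq_self])
    linarith [hupd ▸ ha i (b i) hbi]
  · linarith [abs_le.mp (hu i a), abs_le.mp (hu i b)]

end

theorem statement11_general {n : ℕ} (A : Fin n → Type*)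
    (u : Game A) (hL : ∀ (i : Fin n) (b : ∀ j, A j), |u i b| ≤ 1)
    (a : ∀ j, A j)
    (ha : ∀ (i : Fin n) (bi : A i), bi ≠ a i → u i (Function.update a i bi) < u i a)
    (v : Game A) (hv : v = u + ∑ i : Fin n, zGame 3 i (fun k => a k.1)) :
    ∀ (i : Fin n) (b : ∀ j, A j), b ≠ a → v i a > v i b := by
  subst hv
  exact fun i b hb => lt_add_sum_zGame_of_strict_nash u (by norm_num) hL ha i hb

/-- If the payoffs of `u` lie in `[-1, 1]` and `a` is a strict pure Nash equilibrium
of `u`, then in `v = u + ∑ᵢ z(3, i, a₋ᵢ)` the profile `a` is a strict simultaneous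
maximizer. -/
theorem statement11 {n : ℕ} (hn : 0 < n) (A : Fin n → Type*)
    [∀ i, Fintype (A i)] [∀ i, Nonempty (A i)]
    (u : Game A) (hL : ∀ (i : Fin n) (b : ∀ j, A j), |u i b| ≤ 1)
    (a : ∀ j, A j)
    (ha : ∀ (i : Fin n) (bi : A i), bi ≠ a i → u i (Function.update a i bi) < u i a)
    (v : Game A) (hv : v = u + ∑ i : Fin n, zGame 3 i (fun k => a k.1)) :
    ∀ (i : Fin n) (b : ∀ j, A j), b ≠ a → v i a > v i b :=
  statement11_general A u hL a ha v hv
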